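/- Let L(n) : B^0 → X (n ≥ 0) be bounded linear operators defining the system x(n+1) = L(n)x_n + f(n). Then the following are equivalent: (i) the homogeneous system is uniformly stable in B^0 (equivalently, uniformly stable in X with respect to B^0); (ii) the nonhomogeneous system is (ℓ^1,ℓ^∞)-stable, and for every g ∈ ℓ^1(ℤ≥0, B^0) the solution x(·,0,0_B; Lh) belongs to ℓ^∞(ℤ≥0, X), where h = Hg and (Lh)(n) := L(n)h(n). -/

import Mathlib

open scoped ENNReal
open MeasureTheory

namespace BP

variable {X : Type*} [NormedAddCommGroup X] [NormedSpace ℝ X] [CompleteSpace X]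

/-- Weighted coordinate size: index `k : ℕ` represents the coordinate `−k ≤ 0`,
so the weight `e^{γ m}` becomes `e^{−γ k}`. -/
noncomputable def wnorm (γ : ℝ) (φ : ℕ → X) (k : ℕ) : ℝ := ‖φ k‖ * Real.exp (-(γ * k))

/-- Membership in the phase space `B^γ`. -/
def MemB (γ : ℝ) (φ : ℕ → X) : Prop := BddAbove (Set.range (wnorm γ φ))

/-- The `B^γ` norm `|φ|_{B^γ} = sup_{m ≤ 0} ‖φ(m)‖ e^{γ m}`. -/
noncomputable def Bnorm (γ : ℝ) (φ : ℕ → X) : ℝ := ⨆ k, wnorm γ φ k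

/-- The history `x_n` of `x : ℤ → X` at time `n` : coordinate `−k` is `x (n − k)`. -/
def hist (x : ℤ → X) (n : ℤ) : ℕ → X := fun k => x (n - k)

/-- `x = x(·, τ, φ; f)` is the solution of `x(n+1) = L(n) x_n + f(n)` (`n ≥ τ`), `x_τ = φ`. -/
def IsSolution (L : ℕ → ((ℕ → X) →ₗ[ℝ] X)) (f : ℕ → X) (τ : ℕ) (φ : ℕ → X)
    (x : ℤ → X) : Prop :=
  (∀ k : ℕ, x ((τ : ℤ) - k) = φ k) ∧
  (∀ n : ℕ, τ ≤ n → x ((n : ℤ) + 1) = L n (hist x (n : ℤ)) + f n)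

/-- Restriction of `x : ℤ → X` to `ℤ≥0`. -/
def restrict (x : ℤ → X) : ℕ → X := fun n => x (n : ℤ)

/-- The `ℓ^p(ℤ≥0, X)` norm (valued in `ℝ≥0∞`). -/
noncomputable def lpNorm (p : ℝ≥0∞) {E : Type*} [NormedAddCommGroup E] (f : ℕ → E) : ℝ≥0∞ :=
  eLpNorm f p Measure.count

/-- `L(n)` is a bounded operator from `B^γ` to `X`. -/
def OpBounded (γ : ℝ) (T : (ℕ → X) →ₗ[ℝ] X) : Prop :=
  ∃ C : ℝ, ∀ φ : ℕ → X, MemB γ φ → ‖T φ‖ ≤ C * Bnorm γ φ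

/-- The projection `P_{[−∞,−j]}` : keeps coordinates `−k` with `k ≥ j`. -/
def Ptail (j : ℕ) : (ℕ → X) →ₗ[ℝ] (ℕ → X) where
  toFun φ := fun k => if j ≤ k then φ k else 0
  map_add' φ ψ := by funext k; by_cases h : j ≤ k <;> simp [h]
  map_smul' c φ := by funext k; by_cases h : j ≤ k <;> simp [h]

/-- The projection `P_{[−j,0]}` : keeps coordinates `−k` with `k ≤ j`. -/
def Phead (j : ℕ) : (ℕ → X) →ₗ[ℝ] (ℕ → X) where
  toFun φ := fun k => if k ≤ j then φ k else 0
  map_add' φ ψ := by funext k; by_cases h : k ≤ j <;> simp [h]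
  map_smul' c φ := by funext k; by_cases h : k ≤ j <;> simp [h]

/-- `E_{−j} : X → B^γ`, placing `ψ` at coordinate `−j`. -/
def Ecoord (j : ℕ) : X →ₗ[ℝ] (ℕ → X) where
  toFun ψ := fun k => if k = j then ψ else 0
  map_add' ψ χ := by funext k; by_cases h : k = j <;> simp [h]
  map_smul' c ψ := by funext k; by_cases h : k = j <;> simp [h]

/-- The backward shift `S`. -/
def shiftS : (ℕ → X) →ₗ[ℝ] (ℕ → X) where
  toFun φ := fun k => if k = 0 then 0 else φ (k - 1)
  map_add' φ ψ := by funext k; by_cases h : k = 0 <;> simp [h]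
  map_smul' c φ := by funext k; by_cases h : k = 0 <;> simp [h]

/-- `D(n) = E₀ ∘ L(n) + S`. -/
def Dop (L : ℕ → ((ℕ → X) →ₗ[ℝ] X)) (n : ℕ) : (ℕ → X) →ₗ[ℝ] (ℕ → X) :=
  (Ecoord 0).comp (L n) + shiftS

/-- `h = H g`, `h(n) = Σ_{k=0}^{n−1} S^{n−k−1} (I − P₀) g(k)`. -/
noncomputable def Hop (g : ℕ → (ℕ → X)) : ℕ → (ℕ → X) :=
  fun n => ∑ k ∈ Finset.range n,
    ((shiftS ^ (n - k - 1) : (ℕ → X) →ₗ[ℝ] (ℕ → X))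
      ((LinearMap.id - Phead 0 : (ℕ → X) →ₗ[ℝ] (ℕ → X)) (g k)))

/-- `(ℓ^p, ℓ^q)`-stability of the nonhomogeneous system. -/
def lplqStable (L : ℕ → ((ℕ → X) →ₗ[ℝ] X)) (p q : ℝ≥0∞) : Prop :=
  ∀ f : ℕ → X, lpNorm p f < ∞ → ∀ x : ℤ → X, IsSolution L f 0 0 x →
    lpNorm q (restrict x) < ∞

/-- Uniform exponential stability in `X` w.r.t. `B^γ`. -/
def UESinX (γ : ℝ) (L : ℕ → ((ℕ → X) →ₗ[ℝ] X)) : Prop :=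
  ∃ K : ℝ, 1 ≤ K ∧ ∃ ν : ℝ, 0 < ν ∧
    ∀ (τ : ℕ) (φ : ℕ → X), MemB γ φ → ∀ x : ℤ → X, IsSolution L 0 τ φ x →
      ∀ n : ℕ, τ ≤ n → ‖x (n : ℤ)‖ ≤ K * Real.exp (-(ν * ((n : ℝ) - (τ : ℝ)))) * Bnorm γ φ

/-- Uniform exponential stability in `B^γ`. -/
def UESinB (γ : ℝ) (L : ℕ → ((ℕ → X) →ₗ[ℝ] X)) : Prop :=
  ∃ K : ℝ, 1 ≤ K ∧ ∃ ν : ℝ, 0 < ν ∧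
    ∀ (τ : ℕ) (φ : ℕ → X), MemB γ φ → ∀ x : ℤ → X, IsSolution L 0 τ φ x →
      ∀ n : ℕ, τ ≤ n →
        Bnorm γ (hist x (n : ℤ)) ≤ K * Real.exp (-(ν * ((n : ℝ) - (τ : ℝ)))) * Bnorm γ φ

/-- Uniform stability in `X` w.r.t. `B^γ`. -/
def USinX (γ : ℝ) (L : ℕ → ((ℕ → X) →ₗ[ℝ] X)) : Prop :=
  ∃ K : ℝ, 1 ≤ K ∧
    ∀ (τ : ℕ) (φ : ℕ → X), MemB γ φ → ∀ x : ℤ → X, IsSolution L 0 τ φ x →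
      ∀ n : ℕ, τ ≤ n → ‖x (n : ℤ)‖ ≤ K * Bnorm γ φ

/-- Uniform stability in `B^γ`. -/
def USinB (γ : ℝ) (L : ℕ → ((ℕ → X) →ₗ[ℝ] X)) : Prop :=
  ∃ K : ℝ, 1 ≤ K ∧
    ∀ (τ : ℕ) (φ : ℕ → X), MemB γ φ → ∀ x : ℤ → X, IsSolution L 0 τ φ x →
      ∀ n : ℕ, τ ≤ n → Bnorm γ (hist x (n : ℤ)) ≤ K * Bnorm γ φ

/-- Condition (★): there exists `m ≤ 0` (here `m = −j`, `j : ℕ`) such that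
`sup_{n ≥ 0} ‖L(n) P_{[−∞,m]}‖_{B^γ→X} < ∞`. -/
def StarCond (γ : ℝ) (L : ℕ → ((ℕ → X) →ₗ[ℝ] X)) : Prop :=
  ∃ (j : ℕ) (C : ℝ), ∀ (n : ℕ) (φ : ℕ → X), MemB γ φ → ‖L n (Ptail j φ)‖ ≤ C * Bnorm γ φ

/-- `z` solves the first order system `z(n+1) = A(n) z(n)` (`n ≥ τ`), `z(τ) = ψ`. -/
def IsFOSol (A : ℕ → ((ℕ → X) →ₗ[ℝ] (ℕ → X))) (τ : ℕ) (ψ : ℕ → X)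
    (z : ℕ → (ℕ → X)) : Prop :=
  z τ = ψ ∧ ∀ n : ℕ, τ ≤ n → z (n + 1) = A n (z n)

/-- Uniform exponential stability of the first order system in `B^γ`. -/
def FOUES (γ : ℝ) (A : ℕ → ((ℕ → X) →ₗ[ℝ] (ℕ → X))) : Prop :=
  ∃ K : ℝ, 1 ≤ K ∧ ∃ ν : ℝ, 0 < ν ∧
    ∀ (τ : ℕ) (ψ : ℕ → X), MemB γ ψ → ∀ z : ℕ → (ℕ → X), IsFOSol A τ ψ z →
      ∀ n : ℕ, τ ≤ n →
        Bnorm γ (z n) ≤ K * Real.exp (-(ν * ((n : ℝ) - (τ : ℝ)))) * Bnorm γ ψ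

/-- Uniform stability of the first order system in `B^γ`. -/
def FOUS (γ : ℝ) (A : ℕ → ((ℕ → X) →ₗ[ℝ] (ℕ → X))) : Prop :=
  ∃ K : ℝ, 1 ≤ K ∧
    ∀ (τ : ℕ) (ψ : ℕ → X), MemB γ ψ → ∀ z : ℕ → (ℕ → X), IsFOSol A τ ψ z →
      ∀ n : ℕ, τ ≤ n → Bnorm γ (z n) ≤ K * Bnorm γ ψ

/-- The associated subdiagonal system: `L_sub(0) = 0`, `L_sub(n) = L(n) P_{[−n+1,0]}`. -/
def Lsub (L : ℕ → ((ℕ → X) →ₗ[ℝ] X)) : ℕ → ((ℕ → X) →ₗ[ℝ] X) :=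
  fun n => if n = 0 then 0 else (L n).comp (Phead (n - 1))

/-- The system has bounded delay of order `d`. -/
def BoundedDelay (L : ℕ → ((ℕ → X) →ₗ[ℝ] X)) (d : ℕ) : Prop :=
  ∀ n : ℕ, ∃ A : Fin d → (X →L[ℝ] X), ∀ φ : ℕ → X, L n φ = ∑ k : Fin d, A k (φ k)

/-! ### Auxiliary infrastructure -/

section Aux
set_option linter.unusedSectionVars false

variable {L : ℕ → ((ℕ → X) →ₗ[ℝ] X)}

lemma wnorm_zero (φ : ℕ → X) : wnorm 0 φ = fun k => ‖φ k‖ := by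
  funext k; simp [wnorm]

lemma memB_zero_iff {φ : ℕ → X} :
    MemB 0 φ ↔ BddAbove (Set.range fun k => ‖φ k‖) := by
  rw [MemB, wnorm_zero]

lemma memB_of_forall_le {φ : ℕ → X} {C : ℝ} (h : ∀ k, ‖φ k‖ ≤ C) : MemB 0 φ :=
  memB_zero_iff.2 ⟨C, by rintro r ⟨k, rfl⟩; exact h k⟩

lemma bnorm_zero_eq (φ : ℕ → X) : Bnorm 0 φ = ⨆ k, ‖φ k‖ := by
  rw [Bnorm, wnorm_zero]

lemma norm_le_bnorm {φ : ℕ → X} (h : MemB 0 φ) (k : ℕ) : ‖φ k‖ ≤ Bnorm 0 φ := by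
  rw [bnorm_zero_eq]
  exact le_ciSup (memB_zero_iff.1 h) k

lemma bnorm_le {φ : ℕ → X} {C : ℝ} (h : ∀ k, ‖φ k‖ ≤ C) : Bnorm 0 φ ≤ C := by
  rw [bnorm_zero_eq]
  exact ciSup_le h

lemma bnorm_nonneg (φ : ℕ → X) : 0 ≤ Bnorm 0 φ := by
  rw [bnorm_zero_eq]
  by_cases h : BddAbove (Set.range fun k => ‖φ k‖)
  · exact le_trans (norm_nonneg (φ 0)) (le_ciSup h 0)
  · rw [Real.iSup_of_not_bddAbove h]

lemma bnorm_zero_fun : Bnorm 0 (0 : ℕ → X) = 0 :=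
  le_antisymm (bnorm_le (fun k => by simp)) (bnorm_nonneg _)

lemma memB_zero_fun : MemB 0 (0 : ℕ → X) := memB_of_forall_le (C := 0) (fun k => by simp)

/-! pointwise values of the basic operators -/

lemma Ecoord_apply (ψ : X) (k : ℕ) : Ecoord (X := X) 0 ψ k = if k = 0 then ψ else 0 := rfl

lemma shiftS_apply (φ : ℕ → X) (k : ℕ) :
    shiftS φ k = if k = 0 then 0 else φ (k - 1) := rfl

lemma Phead_apply (j : ℕ) (φ : ℕ → X) (k : ℕ) :
    Phead j φ k = if k ≤ j then φ k else 0 := rfl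

lemma bnorm_Ecoord (ψ : X) : Bnorm 0 (Ecoord (X := X) 0 ψ) = ‖ψ‖ := by
  refine le_antisymm (bnorm_le ?_) ?_
  · intro k
    rcases Nat.eq_zero_or_pos k with hk | hk
    · subst hk; simp [Ecoord_apply]
    · simp [Ecoord_apply, Nat.pos_iff_ne_zero.1 hk]
  · have := norm_le_bnorm (φ := Ecoord (X := X) 0 ψ)
      (memB_of_forall_le (C := ‖ψ‖) ?_) 0
    · simpa [Ecoord_apply] using this
    · intro k
      rcases Nat.eq_zero_or_pos k with hk | hk
      · subst hk; simp [Ecoord_apply]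
      · simp [Ecoord_apply, Nat.pos_iff_ne_zero.1 hk, norm_nonneg]

lemma memB_Ecoord (ψ : X) : MemB 0 (Ecoord (X := X) 0 ψ) := by
  refine memB_of_forall_le (C := ‖ψ‖) ?_
  intro k
  rcases Nat.eq_zero_or_pos k with hk | hk
  · subst hk; simp [Ecoord_apply]
  · simp [Ecoord_apply, Nat.pos_iff_ne_zero.1 hk, norm_nonneg]

lemma sub_Phead_apply (φ : ℕ → X) (k : ℕ) :
    ((LinearMap.id - Phead 0 : (ℕ → X) →ₗ[ℝ] (ℕ → X)) φ) k
      = if k = 0 then 0 else φ k := by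
  rcases Nat.eq_zero_or_pos k with hk | hk
  · subst hk; simp [Phead_apply]
  · have : ¬ k ≤ 0 := by omega
    simp [Phead_apply, this, Nat.pos_iff_ne_zero.1 hk]

lemma norm_sub_Phead_le {φ : ℕ → X} {C : ℝ} (hC : 0 ≤ C) (h : ∀ k, ‖φ k‖ ≤ C) (k : ℕ) :
    ‖((LinearMap.id - Phead 0 : (ℕ → X) →ₗ[ℝ] (ℕ → X)) φ) k‖ ≤ C := by
  rw [sub_Phead_apply]
  split
  · simpa using hC
  · exact h k

lemma memB_sub_Phead {φ : ℕ → X} (h : MemB 0 φ) :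
    MemB 0 ((LinearMap.id - Phead 0 : (ℕ → X) →ₗ[ℝ] (ℕ → X)) φ) :=
  memB_of_forall_le (C := Bnorm 0 φ)
    (norm_sub_Phead_le (bnorm_nonneg φ) (norm_le_bnorm h))

lemma bnorm_sub_Phead_le {φ : ℕ → X} (h : MemB 0 φ) :
    Bnorm 0 ((LinearMap.id - Phead 0 : (ℕ → X) →ₗ[ℝ] (ℕ → X)) φ) ≤ Bnorm 0 φ :=
  bnorm_le (norm_sub_Phead_le (bnorm_nonneg φ) (norm_le_bnorm h))

/-! ### history lemmas -/

lemma hist_succ (x : ℤ → X) (n : ℤ) :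
    hist x (n + 1) = Ecoord 0 (x (n + 1)) + shiftS (hist x n) := by
  funext k
  cases k with
  | zero => simp [hist, Ecoord_apply, shiftS_apply]
  | succ k =>
      simp only [hist, Pi.add_apply, Ecoord_apply, shiftS_apply]
      have : (n : ℤ) + 1 - ((k : ℤ) + 1) = n - k := by ring
      simp [this]

/-! ### Hop lemmas -/

lemma Hop_zero (g : ℕ → (ℕ → X)) : Hop g 0 = 0 := by
  simp [Hop]

lemma Hop_succ (g : ℕ → (ℕ → X)) (n : ℕ) :
    Hop g (n + 1) = shiftS (Hop g n)
      + (LinearMap.id - Phead 0 : (ℕ → X) →ₗ[ℝ] (ℕ → X)) (g n) := by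
  rw [Hop, Finset.sum_range_succ]
  congr 1
  · rw [Hop, map_sum]
    refine Finset.sum_congr rfl ?_
    intro k hk
    have hk' : k < n := Finset.mem_range.1 hk
    have h1 : n + 1 - k - 1 = (n - k - 1) + 1 := by omega
    rw [h1, pow_succ']
    rfl
  · simp

lemma Hop_apply_zero (g : ℕ → (ℕ → X)) (n : ℕ) : Hop g n 0 = 0 := by
  induction n with
  | zero => simp [Hop_zero]
  | succ n ih =>
      rw [Hop_succ]
      have := sub_Phead_apply (g n) 0
      simp only [Pi.add_apply, shiftS_apply, if_pos rfl] at *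
      simp [this]

lemma Hop_coord_le (g : ℕ → (ℕ → X)) (hg : ∀ n, MemB 0 (g n)) (n : ℕ) (j : ℕ) :
    ‖Hop g n j‖ ≤ ∑ k ∈ Finset.range n, Bnorm 0 (g k) := by
  induction n generalizing j with
  | zero => simp [Hop_zero]
  | succ n ih =>
      rw [Hop_succ, Finset.sum_range_succ]
      have h2 : ‖((LinearMap.id - Phead 0 : (ℕ → X) →ₗ[ℝ] (ℕ → X)) (g n)) j‖
          ≤ Bnorm 0 (g n) :=
        norm_sub_Phead_le (bnorm_nonneg _) (norm_le_bnorm (hg n)) j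
      have h1 : ‖shiftS (Hop g n) j‖ ≤ ∑ k ∈ Finset.range n, Bnorm 0 (g k) := by
        rw [shiftS_apply]
        split
        · simpa using Finset.sum_nonneg (fun k _ => bnorm_nonneg (g k))
        · exact ih _
      calc ‖(shiftS (Hop g n)
            + (LinearMap.id - Phead 0 : (ℕ → X) →ₗ[ℝ] (ℕ → X)) (g n)) j‖
          ≤ ‖shiftS (Hop g n) j‖
            + ‖((LinearMap.id - Phead 0 : (ℕ → X) →ₗ[ℝ] (ℕ → X)) (g n)) j‖ :=
            norm_add_le _ _
        _ ≤ _ := add_le_add h1 h2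

/-! ### Construction of solutions -/

/-- History sequence of the solution with forcing `f`, initial time `τ`, initial history `φ`. -/
def solHist (L : ℕ → ((ℕ → X) →ₗ[ℝ] X)) (f : ℕ → X) (τ : ℕ) (φ : ℕ → X) : ℕ → (ℕ → X)
  | 0 => φ
  | (m+1) => Ecoord 0 (L (τ + m) (solHist L f τ φ m) + f (τ + m))
      + shiftS (solHist L f τ φ m)

/-- The solution of the IVP. -/
def solF (L : ℕ → ((ℕ → X) →ₗ[ℝ] X)) (f : ℕ → X) (τ : ℕ) (φ : ℕ → X) : ℤ → X :=
  fun n => if 0 ≤ n - (τ : ℤ) then solHist L f τ φ (n - (τ : ℤ)).toNat 0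
    else φ (((τ : ℤ) - n).toNat)

lemma solHist_succ_zero (L : ℕ → ((ℕ → X) →ₗ[ℝ] X)) (f : ℕ → X) (τ : ℕ) (φ : ℕ → X)
    (m : ℕ) : solHist L f τ φ (m+1) 0 = L (τ + m) (solHist L f τ φ m) + f (τ + m) := by
  simp [solHist, Ecoord_apply, shiftS_apply]

lemma hist_solF (L : ℕ → ((ℕ → X) →ₗ[ℝ] X)) (f : ℕ → X) (τ : ℕ) (φ : ℕ → X) :
    ∀ m : ℕ, hist (solF L f τ φ) ((τ : ℤ) + m) = solHist L f τ φ m := by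
  intro m
  induction m with
  | zero =>
      funext k
      simp only [hist, Nat.cast_zero, add_zero, solHist]
      rcases Nat.eq_zero_or_pos k with hk | hk
      · subst hk
        simp [solF, solHist]
      · have h1 : ¬ (0 : ℤ) ≤ (τ : ℤ) - k - τ := by omega
        simp only [solF, sub_sub_cancel_left]
        rw [if_neg (by omega)]
        congr 1
        omega
  | succ m ih =>
      have hcast : (τ : ℤ) + ((m : ℕ) + 1 : ℕ) = ((τ : ℤ) + m) + 1 := by push_cast; ring
      rw [hcast, hist_succ, ih]
      have hval : solF L f τ φ (((τ : ℤ) + m) + 1) = solHist L f τ φ (m+1) 0 := by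
        simp only [solF]
        rw [if_pos (by omega)]
        congr 1
        omega
      rw [hval]
      funext k
      rcases Nat.eq_zero_or_pos k with hk | hk
      · subst hk
        simp [Ecoord_apply, shiftS_apply, solHist]
      · have hk0 : k ≠ 0 := by omega
        simp [Ecoord_apply, shiftS_apply, hk0, solHist]

lemma isSolution_solF (L : ℕ → ((ℕ → X) →ₗ[ℝ] X)) (f : ℕ → X) (τ : ℕ) (φ : ℕ → X) :
    IsSolution L f τ φ (solF L f τ φ) := by
  constructor
  · intro k
    have := congrFun (hist_solF L f τ φ 0) k
    simpa [hist, solHist] using this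
  · intro n hn
    obtain ⟨m, rfl⟩ := Nat.exists_eq_add_of_le hn
    have h1 : hist (solF L f τ φ) ((τ + m : ℕ) : ℤ) = solHist L f τ φ m := by
      rw [show ((τ + m : ℕ) : ℤ) = (τ : ℤ) + m by push_cast; ring]
      exact hist_solF L f τ φ m
    have h2 : solF L f τ φ (((τ + m : ℕ) : ℤ) + 1) = solHist L f τ φ (m+1) 0 := by
      simp only [solF]
      rw [if_pos (by push_cast; omega)]
      congr 1
      push_cast
      omega
    rw [h2, solHist_succ_zero, h1]

lemma sol_unique {L : ℕ → ((ℕ → X) →ₗ[ℝ] X)} {f : ℕ → X} {τ : ℕ} {φ : ℕ → X}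
    {x y : ℤ → X} (hx : IsSolution L f τ φ x) (hy : IsSolution L f τ φ y) : x = y := by
  have key : ∀ m : ℕ, ∀ n : ℤ, n ≤ (τ : ℤ) + m → x n = y n := by
    intro m
    induction m with
    | zero =>
        intro n hn
        have h1 : n = (τ : ℤ) - (((τ : ℤ) - n).toNat : ℤ) := by omega
        rw [h1, hx.1, hy.1]
    | succ m ih =>
        intro n hn
        by_cases h : n ≤ (τ : ℤ) + m
        · exact ih n h
        · have hn' : n = ((τ + m : ℕ) : ℤ) + 1 := by push_cast; omega
          have hhist : hist x ((τ + m : ℕ) : ℤ) = hist y ((τ + m : ℕ) : ℤ) := by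
            funext j
            exact ih _ (by push_cast; omega)
          rw [hn', hx.2 (τ + m) (Nat.le_add_right _ _), hy.2 (τ + m) (Nat.le_add_right _ _),
            hhist]
  funext n
  exact key (n - (τ : ℤ)).toNat n (by omega)

lemma isSolution_add {L : ℕ → ((ℕ → X) →ₗ[ℝ] X)} {f f' : ℕ → X} {τ : ℕ}
    {φ φ' : ℕ → X} {x y : ℤ → X} (hx : IsSolution L f τ φ x)
    (hy : IsSolution L f' τ φ' y) :
    IsSolution L (f + f') τ (φ + φ') (x + y) := by
  constructor
  · intro k
    simp [hx.1 k, hy.1 k]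
  · intro n hn
    have hh : hist (x + y) (n : ℤ) = hist x (n : ℤ) + hist y (n : ℤ) := rfl
    simp only [Pi.add_apply, hx.2 n hn, hy.2 n hn, hh, map_add]
    abel

lemma isSolution_smul {L : ℕ → ((ℕ → X) →ₗ[ℝ] X)} {f : ℕ → X} {τ : ℕ}
    {φ : ℕ → X} {x : ℤ → X} (c : ℝ) (hx : IsSolution L f τ φ x) :
    IsSolution L (c • f) τ (c • φ) (c • x) := by
  constructor
  · intro k
    simp [hx.1 k]
  · intro n hn
    have hh : hist (c • x) (n : ℤ) = c • hist x (n : ℤ) := rfl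
    simp only [Pi.smul_apply, hx.2 n hn, hh, _root_.map_smul, smul_add]

lemma solHist_zero (L : ℕ → ((ℕ → X) →ₗ[ℝ] X)) (τ : ℕ) :
    ∀ m, solHist L 0 τ (0 : ℕ → X) m = 0 := by
  intro m
  induction m with
  | zero => rfl
  | succ m ih => simp [solHist, ih]

lemma solF_zero (L : ℕ → ((ℕ → X) →ₗ[ℝ] X)) (τ : ℕ) :
    solF L 0 τ (0 : ℕ → X) = 0 := by
  funext n
  simp only [solF]
  split
  · simp [solHist_zero]
  · rfl

/-! ### Superposition -/

lemma superpose {L : ℕ → ((ℕ → X) →ₗ[ℝ] X)} {f : ℕ → X} {x : ℤ → X}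
    (hx : IsSolution L f 0 0 x)
    {ψ : ℕ → (ℕ → X)} {y : ℕ → ℤ → X} (hy : ∀ k, IsSolution L 0 (k+1) (ψ k) (y k))
    {c : ℕ → (ℕ → X)} (hc0 : c 0 = 0)
    (hcs : ∀ n, c (n+1) = Ecoord 0 (L n (c n) - f n) + shiftS (c n) + ψ n) :
    ∀ n : ℕ, hist x (n : ℤ) + c n = ∑ k ∈ Finset.range n, hist (y k) (n : ℤ) := by
  intro n
  induction n with
  | zero =>
      have h0 : hist x (0 : ℤ) = 0 := by
        funext k
        have := hx.1 k
        simpa [hist] using this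
      simp [h0, hc0]
  | succ n ih =>
      have hcast : ((n + 1 : ℕ) : ℤ) = (n : ℤ) + 1 := by push_cast; ring
      have hxn : x ((n : ℤ) + 1) = L n (hist x (n : ℤ)) + f n := by
        simpa using hx.2 n (Nat.zero_le n)
      have hlast : hist (y n) ((n : ℤ) + 1) = ψ n := by
        funext j
        have := (hy n).1 j
        simp only [hist]
        rw [show (n : ℤ) + 1 - j = ((n + 1 : ℕ) : ℤ) - j by push_cast; ring]
        exact this
      have hyk : ∀ k ∈ Finset.range n,
          hist (y k) ((n : ℤ) + 1)
            = Ecoord 0 (L n (hist (y k) (n : ℤ))) + shiftS (hist (y k) (n : ℤ)) := by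
        intro k hk
        have hk' : k < n := Finset.mem_range.1 hk
        have h2 : y k ((n : ℤ) + 1) = L n (hist (y k) (n : ℤ)) + 0 := (hy k).2 n (by omega)
        rw [hist_succ, h2, add_zero]
      rw [hcast, Finset.sum_range_succ, hlast, Finset.sum_congr rfl hyk, hist_succ, hxn,
        hcs n]
      have hsum : ∑ k ∈ Finset.range n,
          (Ecoord 0 (L n (hist (y k) (n : ℤ))) + shiftS (hist (y k) (n : ℤ)))
          = Ecoord 0 (L n (hist x (n : ℤ) + c n)) + shiftS (hist x (n : ℤ) + c n) := by
        rw [Finset.sum_add_distrib, ← map_sum, ← map_sum (L n), ← map_sum, ih]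
      rw [hsum]
      simp only [map_add, map_sub]
      abel

/-! ### lpNorm lemmas -/

lemma count_ae {P : ℕ → Prop} (h : ∀ᵐ n ∂(Measure.count : Measure ℕ), P n) (n : ℕ) :
    P n := by
  by_contra hn
  have h1 : (Measure.count : Measure ℕ) {m | ¬ P m} = 0 := h
  have h2 : (Measure.count : Measure ℕ) {n} ≤ 0 := by
    rw [← h1]
    exact measure_mono (by simpa using hn)
  rw [Measure.count_singleton] at h2
  exact (by norm_num : ¬ ((1 : ℝ≥0∞) ≤ 0)) h2

lemma lpNorm_one_eq {E : Type*} [NormedAddCommGroup E] (f : ℕ → E) :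
    lpNorm 1 f = ∑' k, (‖f k‖₊ : ℝ≥0∞) := by
  rw [lpNorm, eLpNorm_one_eq_lintegral_enorm, lintegral_count]
  rfl

lemma lpNorm_one_partial_sum {E : Type*} [NormedAddCommGroup E] {f : ℕ → E}
    (h : lpNorm 1 f < ∞) (n : ℕ) :
    ∑ k ∈ Finset.range n, ‖f k‖ ≤ (lpNorm 1 f).toReal := by
  have h1 : ∑ k ∈ Finset.range n, (‖f k‖₊ : ℝ≥0∞) ≤ lpNorm 1 f := by
    rw [lpNorm_one_eq]
    exact ENNReal.sum_le_tsum _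
  have h2 := ENNReal.toReal_mono h.ne h1
  calc ∑ k ∈ Finset.range n, ‖f k‖
      = (∑ k ∈ Finset.range n, (‖f k‖₊ : ℝ≥0∞)).toReal := by
        rw [ENNReal.toReal_sum (fun k _ => ENNReal.coe_ne_top)]
        simp [ENNReal.coe_toReal]
    _ ≤ _ := h2

lemma lpNorm_top_lt_top {u : ℕ → X} {C : ℝ} (h : ∀ n, ‖u n‖ ≤ C) : lpNorm ∞ u < ∞ := by
  rw [lpNorm, eLpNorm_exponent_top]
  exact lt_of_le_of_lt (eLpNormEssSup_le_of_ae_bound (C := C) (ae_of_all _ h))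
    ENNReal.ofReal_lt_top

lemma norm_le_of_lpNorm_top {u : ℕ → X} (h : lpNorm ∞ u < ∞) (n : ℕ) :
    ‖u n‖ ≤ (lpNorm ∞ u).toReal := by
  have h1 : ∀ᵐ m ∂(Measure.count : Measure ℕ),
      (‖u m‖₊ : ℝ≥0∞) ≤ eLpNormEssSup u Measure.count :=
    enorm_ae_le_eLpNormEssSup u Measure.count
  have h2 : (‖u n‖₊ : ℝ≥0∞) ≤ lpNorm ∞ u := by
    rw [lpNorm, eLpNorm_exponent_top]
    exact count_ae h1 n
  have h3 := ENNReal.toReal_mono h.ne h2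
  simpa using h3

/-! ### more MemB lemmas -/

lemma memB_iff {φ : ℕ → X} : MemB 0 φ ↔ ∃ C, ∀ k, ‖φ k‖ ≤ C :=
  ⟨fun h => ⟨Bnorm 0 φ, norm_le_bnorm h⟩, fun ⟨_, h⟩ => memB_of_forall_le h⟩

lemma hist_at_start {L : ℕ → ((ℕ → X) →ₗ[ℝ] X)} {f : ℕ → X} {τ : ℕ} {φ : ℕ → X}
    {x : ℤ → X} (hx : IsSolution L f τ φ x) : hist x (τ : ℤ) = φ := by
  funext k
  exact hx.1 k

lemma memB_hist {L : ℕ → ((ℕ → X) →ₗ[ℝ] X)} {f : ℕ → X} {τ : ℕ} {φ : ℕ → X}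
    {x : ℤ → X} (hx : IsSolution L f τ φ x) (hφ : MemB 0 φ) :
    ∀ n : ℕ, τ ≤ n → MemB 0 (hist x (n : ℤ)) := by
  intro n hn
  obtain ⟨m, rfl⟩ := Nat.exists_eq_add_of_le hn
  induction m with
  | zero => rw [Nat.add_zero, hist_at_start hx]; exact hφ
  | succ m ih =>
      obtain ⟨C, hC⟩ := memB_iff.1 (ih (Nat.le_add_right _ _))
      refine memB_iff.2 ⟨max ‖x (((τ + m : ℕ) : ℤ) + 1)‖ C, ?_⟩
      intro k
      have hcast : ((τ + (m+1) : ℕ) : ℤ) = ((τ + m : ℕ) : ℤ) + 1 := by push_cast; ring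
      rw [hcast, hist_succ]
      cases k with
      | zero => simp [Ecoord_apply, shiftS_apply, le_max_iff, le_refl]
      | succ k =>
          have : (k + 1 : ℕ) ≠ 0 := by omega
          simp only [Pi.add_apply, Ecoord_apply, shiftS_apply, if_neg this, zero_add,
            Nat.add_sub_cancel]
          exact le_max_of_le_right (hC k)

/-! ### Part A : USinB ↔ USinX -/

lemma usinb_iff_usinx (L : ℕ → ((ℕ → X) →ₗ[ℝ] X)) : USinB 0 L ↔ USinX 0 L := by
  constructor
  · rintro ⟨K, hK1, hK⟩
    refine ⟨K, hK1, ?_⟩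
    intro τ φ hφ x hx n hn
    have h1 : ‖x ((n : ℤ))‖ ≤ Bnorm 0 (hist x (n : ℤ)) := by
      have := norm_le_bnorm (memB_hist hx hφ n hn) 0
      simpa [hist] using this
    exact h1.trans (hK τ φ hφ x hx n hn)
  · rintro ⟨K, hK1, hK⟩
    refine ⟨K, hK1, ?_⟩
    intro τ φ hφ x hx n hn
    refine bnorm_le ?_
    intro k
    by_cases h : (τ : ℤ) ≤ (n : ℤ) - k
    · have hkn : k ≤ n := by omega
      have hcast : (n : ℤ) - k = ((n - k : ℕ) : ℤ) := by push_cast; omega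
      have := hK τ φ hφ x hx (n - k) (by omega)
      rw [hist, hcast]
      exact this
    · have hj : (n : ℤ) - k = (τ : ℤ) - (((τ : ℤ) - ((n : ℤ) - k)).toNat : ℤ) := by omega
      rw [hist, hj, hx.1]
      calc ‖φ _‖ ≤ Bnorm 0 φ := norm_le_bnorm hφ _
        _ ≤ K * Bnorm 0 φ := le_mul_of_one_le_left (bnorm_nonneg φ) hK1

/-! ### Part B forward direction -/

lemma forward1 {L : ℕ → ((ℕ → X) →ₗ[ℝ] X)} (hUS : USinX 0 L) : lplqStable L 1 ∞ := by
  obtain ⟨K, hK1, hK⟩ := hUS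
  intro f hf x hx
  set y : ℕ → ℤ → X := fun k => solF L 0 (k+1) (Ecoord 0 (f k)) with hy
  have hsup := superpose hx (ψ := fun k => Ecoord 0 (f k)) (y := y)
    (fun k => isSolution_solF L 0 (k+1) (Ecoord 0 (f k)))
    (c := fun _ => 0) rfl ?hcs
  case hcs =>
    intro n
    simp only [map_zero, zero_sub, map_neg]
    funext j
    simp
  have key : ∀ n : ℕ, ‖x (n : ℤ)‖ ≤ K * (lpNorm 1 f).toReal := by
    intro n
    have h0 := congrFun (hsup n) 0
    simp only [Pi.add_apply, Pi.zero_apply, add_zero, Finset.sum_apply] at h0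
    have hx0 : x (n : ℤ) = ∑ k ∈ Finset.range n, y k (n : ℤ) := by
      simpa [hist] using h0
    rw [hx0]
    calc ‖∑ k ∈ Finset.range n, y k (n : ℤ)‖
        ≤ ∑ k ∈ Finset.range n, ‖y k (n : ℤ)‖ := norm_sum_le _ _
      _ ≤ ∑ k ∈ Finset.range n, K * ‖f k‖ := by
          refine Finset.sum_le_sum ?_
          intro k hk
          have hk' : k < n := Finset.mem_range.1 hk
          have := hK (k+1) (Ecoord 0 (f k)) (memB_Ecoord (f k)) (y k)
            (isSolution_solF L 0 (k+1) (Ecoord 0 (f k))) n (by omega)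
          rwa [bnorm_Ecoord] at this
      _ = K * ∑ k ∈ Finset.range n, ‖f k‖ := by rw [Finset.mul_sum]
      _ ≤ K * (lpNorm 1 f).toReal := by
          refine mul_le_mul_of_nonneg_left (lpNorm_one_partial_sum hf n) (by linarith)
  exact lpNorm_top_lt_top key

lemma forward2 {L : ℕ → ((ℕ → X) →ₗ[ℝ] X)} (hUS : USinX 0 L)
    (g : ℕ → (ℕ → X)) (hg : ∀ n, MemB 0 (g n))
    (hg1 : lpNorm 1 (fun n => Bnorm 0 (g n)) < ∞)
    (x : ℤ → X) (hx : IsSolution L (fun n => L n (Hop g n)) 0 0 x) :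
    lpNorm ∞ (restrict x) < ∞ := by
  obtain ⟨K, hK1, hK⟩ := hUS
  set ψ : ℕ → (ℕ → X) :=
    fun k => (LinearMap.id - Phead 0 : (ℕ → X) →ₗ[ℝ] (ℕ → X)) (g k) with hψ
  set y : ℕ → ℤ → X := fun k => solF L 0 (k+1) (ψ k) with hy
  have hsup := superpose hx (ψ := ψ) (y := y)
    (fun k => isSolution_solF L 0 (k+1) (ψ k))
    (c := Hop g) (Hop_zero g) ?hcs
  case hcs =>
    intro n
    rw [Hop_succ]
    simp only [sub_self, map_zero]
    abel
  have key : ∀ n : ℕ, ‖x (n : ℤ)‖ ≤ K * (lpNorm 1 (fun n => Bnorm 0 (g n))).toReal := by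
    intro n
    have h0 := congrFun (hsup n) 0
    simp only [Pi.add_apply, Finset.sum_apply, Hop_apply_zero, add_zero] at h0
    have hx0 : x (n : ℤ) = ∑ k ∈ Finset.range n, y k (n : ℤ) := by
      simpa [hist] using h0
    rw [hx0]
    calc ‖∑ k ∈ Finset.range n, y k (n : ℤ)‖
        ≤ ∑ k ∈ Finset.range n, ‖y k (n : ℤ)‖ := norm_sum_le _ _
      _ ≤ ∑ k ∈ Finset.range n, K * Bnorm 0 (g k) := by
          refine Finset.sum_le_sum ?_
          intro k hk
          have hk' : k < n := Finset.mem_range.1 hk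
          have h1 := hK (k+1) (ψ k) (memB_sub_Phead (hg k)) (y k)
            (isSolution_solF L 0 (k+1) (ψ k)) n (by omega)
          refine h1.trans ?_
          exact mul_le_mul_of_nonneg_left (bnorm_sub_Phead_le (hg k)) (by linarith)
      _ = K * ∑ k ∈ Finset.range n, Bnorm 0 (g k) := by rw [Finset.mul_sum]
      _ ≤ K * (lpNorm 1 (fun n => Bnorm 0 (g n))).toReal := by
          refine mul_le_mul_of_nonneg_left ?_ (by linarith)
          have := lpNorm_one_partial_sum hg1 n
          calc ∑ k ∈ Finset.range n, Bnorm 0 (g k)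
              = ∑ k ∈ Finset.range n, ‖Bnorm 0 (g k)‖ := by
                refine Finset.sum_congr rfl ?_
                intro k _
                rw [Real.norm_of_nonneg (bnorm_nonneg _)]
            _ ≤ _ := this
  exact lpNorm_top_lt_top key

/-! ### Banach space infrastructure for the backward direction -/

lemma lp_one_partial_sum {Y : Type*} [NormedAddCommGroup Y]
    (g : lp (fun _ : ℕ => Y) 1) (n : ℕ) :
    ∑ k ∈ Finset.range n, ‖g k‖ ≤ ‖g‖ := by
  have h := lp.hasSum_norm (p := 1) (by norm_num) g
  simp only [ENNReal.toReal_one, Real.rpow_one] at h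
  exact sum_le_hasSum _ (fun k _ => norm_nonneg _) h

lemma lp_one_lpNorm_lt_top {Y : Type*} [NormedAddCommGroup Y]
    (g : lp (fun _ : ℕ => Y) 1) : lpNorm 1 (⇑g) < ∞ := by
  rw [lpNorm_one_eq]
  have hs : Summable (fun k => ‖g k‖) := by
    have := (lp.memℓp g).summable (p := 1) (by norm_num)
    simpa using this
  have hs' : Summable (fun k => ‖g k‖₊) := by
    rw [← NNReal.summable_coe]
    simpa using hs
  exact lt_of_le_of_ne le_top (ENNReal.tsum_coe_ne_top_iff_summable.2 hs')

lemma memB_of_lpinf (φ : lp (fun _ : ℕ => X) ∞) : MemB 0 ⇑φ :=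
  memB_zero_iff.2 (memℓp_infty_iff.1 (lp.memℓp φ))

lemma bnorm_le_lpinf_norm (φ : lp (fun _ : ℕ => X) ∞) : Bnorm 0 ⇑φ ≤ ‖φ‖ :=
  bnorm_le (fun k => lp.norm_apply_le_norm ENNReal.top_ne_zero φ k)

lemma bnorm_eq_lpinf_norm (φ : lp (fun _ : ℕ => X) ∞) : Bnorm 0 ⇑φ = ‖φ‖ := by
  rw [lp.norm_eq_ciSup, bnorm_zero_eq]

lemma solHist_bound (L : ℕ → ((ℕ → X) →ₗ[ℝ] X)) (hL : ∀ n, OpBounded 0 (L n)) (m : ℕ) :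
    ∃ c : ℝ, 0 ≤ c ∧ ∀ (f : ℕ → X) (B : ℝ), 0 ≤ B → (∀ k, k < m → ‖f k‖ ≤ B) →
      ∀ j, ‖solHist L f 0 0 m j‖ ≤ c * B := by
  induction m with
  | zero =>
      exact ⟨0, le_refl 0, fun f B hB hf j => by simp [solHist]⟩
  | succ m ih =>
      obtain ⟨c, hc0, hc⟩ := ih
      obtain ⟨C, hC⟩ := hL m
      refine ⟨max C 0 * c + 1 + c, by positivity, ?_⟩
      intro f B hB hf j
      have hcc := hc f B hB (fun k hk => hf k (by omega))
      have hmem : MemB 0 (solHist L f 0 0 m) := memB_of_forall_le hcc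
      have hb : Bnorm 0 (solHist L f 0 0 m) ≤ c * B := bnorm_le hcc
      have hbn : 0 ≤ Bnorm 0 (solHist L f 0 0 m) := bnorm_nonneg _
      cases j with
      | zero =>
          have h0 : solHist L f 0 0 (m+1) 0 = L m (solHist L f 0 0 m) + f m := by
            have := solHist_succ_zero L f 0 0 m
            simpa using this
          rw [h0]
          have h1 : ‖L m (solHist L f 0 0 m)‖ ≤ max C 0 * (c * B) := by
            calc ‖L m (solHist L f 0 0 m)‖ ≤ C * Bnorm 0 (solHist L f 0 0 m) :=
                  hC _ hmem
              _ ≤ max C 0 * Bnorm 0 (solHist L f 0 0 m) := by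
                  exact mul_le_mul_of_nonneg_right (le_max_left _ _) hbn
              _ ≤ max C 0 * (c * B) := by
                  exact mul_le_mul_of_nonneg_left hb (le_max_right _ _)
          have h2 : ‖f m‖ ≤ B := hf m (by omega)
          have h3 := norm_add_le (L m (solHist L f 0 0 m)) (f m)
          have hcB : 0 ≤ c * B := mul_nonneg hc0 hB
          nlinarith [mul_nonneg (le_max_right C 0) hcB]
      | succ j =>
          have h0 : solHist L f 0 0 (m+1) (j+1) = solHist L f 0 0 m j := by
            simp [solHist, Ecoord_apply, shiftS_apply]
          rw [h0]
          have := hcc j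
          nlinarith [mul_nonneg (mul_nonneg (le_max_right C 0) hc0) hB]

lemma Hop_add (a b : ℕ → (ℕ → X)) (n : ℕ) :
    Hop (fun k => a k + b k) n = Hop a n + Hop b n := by
  simp only [Hop, map_add]
  rw [← Finset.sum_add_distrib]

lemma Hop_smul (c : ℝ) (a : ℕ → (ℕ → X)) (n : ℕ) :
    Hop (fun k => c • a k) n = c • Hop a n := by
  simp only [Hop, _root_.map_smul]
  rw [← Finset.smul_sum]

/-- The solution operator `f ↦ x(·,0,0;f)(n)` on `ℓ¹`. -/
noncomputable def TopL (L : ℕ → ((ℕ → X) →ₗ[ℝ] X)) (n : ℕ) :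
    lp (fun _ : ℕ => X) 1 →ₗ[ℝ] X where
  toFun f := solF L (⇑f) 0 0 (n : ℤ)
  map_add' f f' := by
    have h : IsSolution L (⇑f + ⇑f') 0 0 (solF L ⇑f 0 0 + solF L ⇑f' 0 0) := by
      have := isSolution_add (isSolution_solF L ⇑f 0 0) (isSolution_solF L ⇑f' 0 0)
      simpa using this
    have h2 : solF L (⇑(f + f')) 0 0 = solF L ⇑f 0 0 + solF L ⇑f' 0 0 := by
      refine sol_unique (isSolution_solF _ _ _ _) ?_
      rw [lp.coeFn_add]
      exact h
    exact congrFun h2 _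
  map_smul' c f := by
    have h : IsSolution L (c • ⇑f) 0 0 (c • solF L ⇑f 0 0) := by
      have := isSolution_smul c (isSolution_solF L ⇑f 0 0)
      simpa using this
    have h2 : solF L (⇑(c • f)) 0 0 = c • solF L ⇑f 0 0 := by
      refine sol_unique (isSolution_solF _ _ _ _) ?_
      rw [lp.coeFn_smul]
      exact h
    simpa using congrFun h2 (n : ℤ)

/-- The solution operator `g ↦ x(·,0,0;L(Hg))(n)` on `ℓ¹(B⁰)`. -/
noncomputable def TopL' (L : ℕ → ((ℕ → X) →ₗ[ℝ] X)) (n : ℕ) :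
    lp (fun _ : ℕ => (lp (fun _ : ℕ => X) ∞)) 1 →ₗ[ℝ] X where
  toFun g := solF L (fun m => L m (Hop (fun k => ⇑(g k)) m)) 0 0 (n : ℤ)
  map_add' g g' := by
    have hco : (fun k => (⇑((g + g') k) : ℕ → X))
        = fun k => (⇑(g k) + ⇑(g' k) : ℕ → X) := by
      funext k
      have h1 := congrFun (lp.coeFn_add g g') k
      rw [h1]
      exact lp.coeFn_add (g k) (g' k)
    have hforce : (fun m => L m (Hop (fun k => (⇑((g + g') k) : ℕ → X)) m))
        = (fun m => L m (Hop (fun k => (⇑(g k) : ℕ → X)) m))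
          + (fun m => L m (Hop (fun k => (⇑(g' k) : ℕ → X)) m)) := by
      funext m
      rw [hco]
      simp only [Pi.add_apply]
      rw [Hop_add, map_add]
    have h : IsSolution L
        ((fun m => L m (Hop (fun k => (⇑(g k) : ℕ → X)) m))
          + (fun m => L m (Hop (fun k => (⇑(g' k) : ℕ → X)) m))) 0 0
        (solF L (fun m => L m (Hop (fun k => (⇑(g k) : ℕ → X)) m)) 0 0
          + solF L (fun m => L m (Hop (fun k => (⇑(g' k) : ℕ → X)) m)) 0 0) := by
      have := isSolution_add
        (isSolution_solF L (fun m => L m (Hop (fun k => (⇑(g k) : ℕ → X)) m)) 0 0)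
        (isSolution_solF L (fun m => L m (Hop (fun k => (⇑(g' k) : ℕ → X)) m)) 0 0)
      simpa using this
    have h2 := sol_unique (isSolution_solF L
        (fun m => L m (Hop (fun k => (⇑((g + g') k) : ℕ → X)) m)) 0 0)
      (by rw [hforce]; exact h)
    simpa using congrFun h2 (n : ℤ)
  map_smul' c g := by
    have hco : (fun k => (⇑((c • g) k) : ℕ → X))
        = fun k => c • (⇑(g k) : ℕ → X) := by
      funext k
      have h1 := congrFun (lp.coeFn_smul c g) k
      rw [h1]
      exact lp.coeFn_smul c (g k)
    have hforce : (fun m => L m (Hop (fun k => (⇑((c • g) k) : ℕ → X)) m))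
        = c • (fun m => L m (Hop (fun k => (⇑(g k) : ℕ → X)) m)) := by
      funext m
      rw [hco]
      simp only [Pi.smul_apply]
      rw [Hop_smul, _root_.map_smul]
    have h : IsSolution L
        (c • fun m => L m (Hop (fun k => (⇑(g k) : ℕ → X)) m)) 0 0
        (c • solF L (fun m => L m (Hop (fun k => (⇑(g k) : ℕ → X)) m)) 0 0) := by
      have := isSolution_smul c
        (isSolution_solF L (fun m => L m (Hop (fun k => (⇑(g k) : ℕ → X)) m)) 0 0)
      simpa using this
    have h2 := sol_unique (isSolution_solF L
        (fun m => L m (Hop (fun k => (⇑((c • g) k) : ℕ → X)) m)) 0 0)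
      (by rw [hforce]; exact h)
    simpa using congrFun h2 (n : ℤ)

lemma solF_at_nat (L : ℕ → ((ℕ → X) →ₗ[ℝ] X)) (f : ℕ → X) (n : ℕ) :
    solF L f 0 0 ((n : ℕ) : ℤ) = solHist L f 0 0 n 0 := by
  simp only [solF]
  rw [if_pos (by omega)]
  congr 2

set_option maxHeartbeats 2000000 in
lemma backward (L : ℕ → ((ℕ → X) →ₗ[ℝ] X)) (hL : ∀ n, OpBounded 0 (L n))
    (h1 : lplqStable L 1 ∞)
    (h2 : ∀ g : ℕ → (ℕ → X), (∀ n, MemB 0 (g n)) →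
      lpNorm 1 (fun n => Bnorm 0 (g n)) < ∞ →
      ∀ x : ℤ → X, IsSolution L (fun n => L n (Hop g n)) 0 0 x →
        lpNorm ∞ (restrict x) < ∞) :
    USinX 0 L := by
  classical
  -- per-operator constants
  set Cf : ℕ → ℝ := fun m => max (hL m).choose 0 with hCf_def
  have hCf0 : ∀ m, 0 ≤ Cf m := fun m => le_max_right _ _
  have hCf : ∀ m (φ : ℕ → X), MemB 0 φ → ‖L m φ‖ ≤ Cf m * Bnorm 0 φ := by
    intro m φ hφ
    refine ((hL m).choose_spec φ hφ).trans ?_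
    exact mul_le_mul_of_nonneg_right (le_max_left _ _) (bnorm_nonneg φ)
  -- the family T of continuous operators on ℓ¹(X)
  have hTbdd : ∀ n : ℕ, ∃ C, ∀ f : lp (fun _ : ℕ => X) 1, ‖TopL L n f‖ ≤ C * ‖f‖ := by
    intro n
    obtain ⟨c, hc0, hc⟩ := solHist_bound L hL n
    refine ⟨c, fun f => ?_⟩
    have hval : TopL L n f = solHist L ⇑f 0 0 n 0 := solF_at_nat L ⇑f n
    rw [hval]
    exact hc ⇑f ‖f‖ (norm_nonneg f) (fun k _ => lp.norm_apply_le_norm one_ne_zero f k) 0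
  set T : ℕ → (lp (fun _ : ℕ => X) 1 →L[ℝ] X) :=
    fun n => (TopL L n).mkContinuousOfExistsBound (hTbdd n) with hT_def
  have hTapp : ∀ (n : ℕ) (f : lp (fun _ : ℕ => X) 1),
      T n f = solF L ⇑f 0 0 (n : ℤ) := fun n f => rfl
  have hpt1 : ∀ f : lp (fun _ : ℕ => X) 1, ∃ C, ∀ n, ‖T n f‖ ≤ C := by
    intro f
    have hlt := h1 ⇑f (lp_one_lpNorm_lt_top f) _ (isSolution_solF L ⇑f 0 0)
    refine ⟨(lpNorm ∞ (restrict (solF L ⇑f 0 0))).toReal, fun n => ?_⟩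
    rw [hTapp]
    exact norm_le_of_lpNorm_top hlt n
  obtain ⟨M₁, hM₁⟩ := banach_steinhaus hpt1
  have hM₁0 : 0 ≤ M₁ := le_trans (norm_nonneg (T 0)) (hM₁ 0)
  -- the family T' of continuous operators on ℓ¹(ℓ^∞(X))
  have hT'bdd : ∀ n : ℕ, ∃ C, ∀ g : lp (fun _ : ℕ => lp (fun _ : ℕ => X) ∞) 1,
      ‖TopL' L n g‖ ≤ C * ‖g‖ := by
    intro n
    obtain ⟨c, hc0, hc⟩ := solHist_bound L hL n
    refine ⟨c * ∑ j ∈ Finset.range n, Cf j, fun g => ?_⟩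
    have hval : TopL' L n g
        = solHist L (fun m => L m (Hop (fun k => ⇑(g k)) m)) 0 0 n 0 :=
      solF_at_nat L _ n
    rw [hval]
    have hforce : ∀ m, m < n →
        ‖L m (Hop (fun k => (⇑(g k) : ℕ → X)) m)‖
          ≤ (∑ j ∈ Finset.range n, Cf j) * ‖g‖ := by
      intro m hm
      have hcoord := Hop_coord_le (fun k => (⇑(g k) : ℕ → X))
        (fun k => memB_of_lpinf (g k)) m
      have hmem : MemB 0 (Hop (fun k => (⇑(g k) : ℕ → X)) m) :=
        memB_of_forall_le hcoord
      have hb : Bnorm 0 (Hop (fun k => (⇑(g k) : ℕ → X)) m)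
          ≤ ∑ k ∈ Finset.range m, Bnorm 0 (⇑(g k)) := bnorm_le hcoord
      have hb2 : ∑ k ∈ Finset.range m, Bnorm 0 (⇑(g k)) ≤ ‖g‖ :=
        le_trans (Finset.sum_le_sum (fun k _ => bnorm_le_lpinf_norm (g k)))
          (lp_one_partial_sum g m)
      have h4 : Cf m ≤ ∑ j ∈ Finset.range n, Cf j :=
        Finset.single_le_sum (fun j _ => hCf0 j) (Finset.mem_range.2 hm)
      calc ‖L m (Hop (fun k => (⇑(g k) : ℕ → X)) m)‖
          ≤ Cf m * Bnorm 0 (Hop (fun k => (⇑(g k) : ℕ → X)) m) := hCf m _ hmem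
        _ ≤ Cf m * ‖g‖ :=
            mul_le_mul_of_nonneg_left (hb.trans hb2) (hCf0 m)
        _ ≤ (∑ j ∈ Finset.range n, Cf j) * ‖g‖ :=
            mul_le_mul_of_nonneg_right h4 (norm_nonneg g)
    have hB : 0 ≤ (∑ j ∈ Finset.range n, Cf j) * ‖g‖ :=
      mul_nonneg (Finset.sum_nonneg fun j _ => hCf0 j) (norm_nonneg g)
    have := hc _ _ hB hforce 0
    calc ‖solHist L (fun m => L m (Hop (fun k => ⇑(g k)) m)) 0 0 n 0‖
        ≤ c * ((∑ j ∈ Finset.range n, Cf j) * ‖g‖) := this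
      _ = c * (∑ j ∈ Finset.range n, Cf j) * ‖g‖ := by ring
  set T' : ℕ → (lp (fun _ : ℕ => lp (fun _ : ℕ => X) ∞) 1 →L[ℝ] X) :=
    fun n => (TopL' L n).mkContinuousOfExistsBound (hT'bdd n) with hT'_def
  have hT'app : ∀ (n : ℕ) (g : lp (fun _ : ℕ => lp (fun _ : ℕ => X) ∞) 1),
      T' n g = solF L (fun m => L m (Hop (fun k => ⇑(g k)) m)) 0 0 (n : ℤ) :=
    fun n g => rfl
  have hpt2 : ∀ g : lp (fun _ : ℕ => lp (fun _ : ℕ => X) ∞) 1,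
      ∃ C, ∀ n, ‖T' n g‖ ≤ C := by
    intro g
    have hgm : ∀ k, MemB 0 (⇑(g k) : ℕ → X) := fun k => memB_of_lpinf (g k)
    have hg1 : lpNorm 1 (fun k => Bnorm 0 (⇑(g k) : ℕ → X)) < ∞ := by
      rw [lpNorm_one_eq]
      have hs : Summable (fun k => ‖g k‖₊) := by
        rw [← NNReal.summable_coe]
        have := (lp.memℓp g).summable (p := 1) (by norm_num)
        simpa using this
      refine lt_of_le_of_lt (ENNReal.tsum_le_tsum (fun k => ?_))
        (lt_of_le_of_ne le_top (ENNReal.tsum_coe_ne_top_iff_summable.2 hs))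
      refine ENNReal.coe_le_coe.2 ?_
      rw [← NNReal.coe_le_coe, coe_nnnorm, coe_nnnorm,
        Real.norm_of_nonneg (bnorm_nonneg _)]
      exact bnorm_le_lpinf_norm (g k)
    have hlt := h2 (fun k => (⇑(g k) : ℕ → X)) hgm hg1 _
      (isSolution_solF L (fun m => L m (Hop (fun k => (⇑(g k) : ℕ → X)) m)) 0 0)
    refine ⟨(lpNorm ∞ (restrict (solF L
        (fun m => L m (Hop (fun k => (⇑(g k) : ℕ → X)) m)) 0 0))).toReal, fun n => ?_⟩
    rw [hT'app]
    exact norm_le_of_lpNorm_top hlt n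
  obtain ⟨M₂, hM₂⟩ := banach_steinhaus hpt2
  have hM₂0 : 0 ≤ M₂ := le_trans (norm_nonneg (T' 0)) (hM₂ 0)
  -- Piece 1 : solutions started from data concentrated at coordinate 0
  have piece1 : ∀ τ : ℕ, 1 ≤ τ → ∀ ψ0 : X, ∀ n : ℕ, τ ≤ n →
      ‖solF L 0 τ (Ecoord 0 ψ0) (n : ℤ)‖ ≤ M₁ * ‖ψ0‖ := by
    intro τ hτ ψ0 n hn
    set fδ : lp (fun _ : ℕ => X) 1 := lp.single 1 (τ-1) ψ0 with hfδ
    have hsup := superpose (isSolution_solF L (⇑fδ) 0 0)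
      (ψ := fun k => Ecoord 0 (fδ k))
      (y := fun k => solF L 0 (k+1) (Ecoord 0 (fδ k)))
      (fun k => isSolution_solF _ _ _ _) (c := fun _ => 0) rfl
      (by
        intro m
        simp only [map_zero, zero_sub, map_neg]
        funext j
        simp)
    have h0 := congrFun (hsup n) 0
    simp only [Pi.add_apply, Pi.zero_apply, add_zero, Finset.sum_apply] at h0
    have hsum : ∑ k ∈ Finset.range n,
        hist (solF L 0 (k+1) (Ecoord 0 (fδ k))) (n : ℤ) 0
        = solF L 0 τ (Ecoord 0 ψ0) (n : ℤ) := by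
      rw [Finset.sum_eq_single_of_mem (τ - 1) (Finset.mem_range.2 (by omega)) ?_]
      · have hself : fδ (τ - 1) = ψ0 := by
          rw [hfδ]
          exact lp.single_apply_self (E := fun _ : ℕ => X) 1 (τ-1) ψ0
        rw [hself]
        simp only [hist, Nat.cast_zero, sub_zero]
        rw [show τ - 1 + 1 = τ from by omega]
      · intro k _ hkne
        have hzero : fδ k = 0 :=
          lp.single_apply_ne (E := fun _ : ℕ => X) 1 (τ-1) ψ0 hkne
        rw [hzero, map_zero, solF_zero]
        rfl
    have hTn : T n fδ = solF L 0 τ (Ecoord 0 ψ0) (n : ℤ) := by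
      rw [hTapp]
      calc solF L (⇑fδ) 0 0 (n : ℤ)
          = hist (solF L (⇑fδ) 0 0) (n : ℤ) 0 := by simp [hist]
        _ = _ := by rw [h0, ← hsum]
    rw [← hTn]
    calc ‖T n fδ‖
        ≤ ‖T n‖ * ‖fδ‖ := (T n).le_opNorm _
      _ ≤ M₁ * ‖fδ‖ := mul_le_mul_of_nonneg_right (hM₁ n) (norm_nonneg _)
      _ = M₁ * ‖ψ0‖ := by
          rw [hfδ, lp.norm_single (E := fun _ : ℕ => X) (p := 1) (by norm_num) (τ-1) ψ0]
  -- Piece 2 : solutions started from data vanishing at coordinate 0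
  have piece2 : ∀ τ : ℕ, 1 ≤ τ → ∀ φ : ℕ → X, MemB 0 φ → ∀ n : ℕ, τ ≤ n →
      ‖solF L 0 τ ((LinearMap.id - Phead 0 : (ℕ → X) →ₗ[ℝ] (ℕ → X)) φ) (n : ℤ)‖
        ≤ M₂ * Bnorm 0 φ := by
    intro τ hτ φ hφ n hn
    set φE : lp (fun _ : ℕ => X) ∞ := ⟨φ, memℓp_infty (memB_zero_iff.1 hφ)⟩ with hφE
    set gδ : lp (fun _ : ℕ => lp (fun _ : ℕ => X) ∞) 1 := lp.single 1 (τ-1) φE with hgδ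
    have hsup := superpose (isSolution_solF L
        (fun m => L m (Hop (fun k => (⇑(gδ k) : ℕ → X)) m)) 0 0)
      (ψ := fun k => (LinearMap.id - Phead 0 : (ℕ → X) →ₗ[ℝ] (ℕ → X)) (⇑(gδ k)))
      (y := fun k => solF L 0 (k+1)
        ((LinearMap.id - Phead 0 : (ℕ → X) →ₗ[ℝ] (ℕ → X)) (⇑(gδ k))))
      (fun k => isSolution_solF _ _ _ _)
      (c := Hop (fun k => (⇑(gδ k) : ℕ → X))) (Hop_zero _)
      (by
        intro m
        rw [Hop_succ]
        simp only [sub_self, map_zero]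
        abel)
    have h0 := congrFun (hsup n) 0
    simp only [Pi.add_apply, Finset.sum_apply, Hop_apply_zero, add_zero] at h0
    have hcoe : (⇑(gδ (τ-1)) : ℕ → X) = φ := by
      rw [hgδ, lp.single_apply_self, hφE]
    have hsum : ∑ k ∈ Finset.range n,
        hist (solF L 0 (k+1)
          ((LinearMap.id - Phead 0 : (ℕ → X) →ₗ[ℝ] (ℕ → X)) (⇑(gδ k)))) (n : ℤ) 0
        = solF L 0 τ ((LinearMap.id - Phead 0 : (ℕ → X) →ₗ[ℝ] (ℕ → X)) φ) (n : ℤ) := by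
      rw [Finset.sum_eq_single_of_mem (τ - 1) (Finset.mem_range.2 (by omega)) ?_]
      · rw [hcoe]
        simp only [hist, Nat.cast_zero, sub_zero]
        rw [show τ - 1 + 1 = τ from by omega]
      · intro k _ hkne
        have hk0 : gδ k = 0 := by
          rw [hgδ]
          exact lp.single_apply_ne (E := fun _ : ℕ => lp (fun _ : ℕ => X) ∞) 1 (τ-1) φE hkne
        rw [hk0]
        have : (⇑(0 : lp (fun _ : ℕ => X) ∞) : ℕ → X) = 0 := lp.coeFn_zero _ _
        rw [this, map_zero, solF_zero]
        rfl
    have hTn : T' n gδ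
        = solF L 0 τ ((LinearMap.id - Phead 0 : (ℕ → X) →ₗ[ℝ] (ℕ → X)) φ) (n : ℤ) := by
      rw [hT'app]
      calc solF L (fun m => L m (Hop (fun k => (⇑(gδ k) : ℕ → X)) m)) 0 0 (n : ℤ)
          = hist (solF L (fun m => L m (Hop (fun k => (⇑(gδ k) : ℕ → X)) m)) 0 0)
              (n : ℤ) 0 := by simp [hist]
        _ = _ := by rw [h0, ← hsum]
    rw [← hTn]
    calc ‖T' n gδ‖ ≤ ‖T' n‖ * ‖gδ‖ := (T' n).le_opNorm _
      _ ≤ M₂ * ‖gδ‖ := mul_le_mul_of_nonneg_right (hM₂ n) (norm_nonneg _)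
      _ = M₂ * Bnorm 0 φ := by
          rw [hgδ, lp.norm_single (E := fun _ : ℕ => lp (fun _ : ℕ => X) ∞) (p := 1) (by norm_num) (τ-1) φE]
          congr 1
          rw [← bnorm_eq_lpinf_norm φE]
  -- main bound for τ ≥ 1
  have main1 : ∀ τ : ℕ, 1 ≤ τ → ∀ φ : ℕ → X, MemB 0 φ → ∀ x : ℤ → X,
      IsSolution L 0 τ φ x → ∀ n : ℕ, τ ≤ n →
      ‖x (n : ℤ)‖ ≤ (M₁ + M₂) * Bnorm 0 φ := by
    intro τ hτ φ hφ x hx n hn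
    have hψsum : Ecoord 0 (φ 0)
        + (LinearMap.id - Phead 0 : (ℕ → X) →ₗ[ℝ] (ℕ → X)) φ = φ := by
      funext k
      rw [Pi.add_apply, Ecoord_apply, sub_Phead_apply]
      cases k with
      | zero => simp
      | succ k => simp
    have hdec : x = solF L 0 τ (Ecoord 0 (φ 0))
        + solF L 0 τ ((LinearMap.id - Phead 0 : (ℕ → X) →ₗ[ℝ] (ℕ → X)) φ) := by
      refine sol_unique hx ?_
      have := isSolution_add (isSolution_solF L 0 τ (Ecoord 0 (φ 0)))
        (isSolution_solF L 0 τ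
          ((LinearMap.id - Phead 0 : (ℕ → X) →ₗ[ℝ] (ℕ → X)) φ))
      rw [hψsum] at this
      simpa using this
    rw [hdec]
    have h1 := piece1 τ hτ (φ 0) n hn
    have h2' := piece2 τ hτ φ hφ n hn
    have h3 : ‖φ 0‖ ≤ Bnorm 0 φ := norm_le_bnorm hφ 0
    calc ‖(solF L 0 τ (Ecoord 0 (φ 0))
          + solF L 0 τ ((LinearMap.id - Phead 0 : (ℕ → X) →ₗ[ℝ] (ℕ → X)) φ)) (n : ℤ)‖
        ≤ ‖solF L 0 τ (Ecoord 0 (φ 0)) (n : ℤ)‖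
          + ‖solF L 0 τ ((LinearMap.id - Phead 0 : (ℕ → X) →ₗ[ℝ] (ℕ → X)) φ) (n : ℤ)‖ :=
          norm_add_le _ _
      _ ≤ M₁ * ‖φ 0‖ + M₂ * Bnorm 0 φ := add_le_add h1 h2'
      _ ≤ M₁ * Bnorm 0 φ + M₂ * Bnorm 0 φ :=
          add_le_add_left (mul_le_mul_of_nonneg_left h3 hM₁0) _
      _ = (M₁ + M₂) * Bnorm 0 φ := by ring
  -- assemble the constant
  have hA : 0 ≤ (M₁ + M₂ + 1) * Cf 0 :=
    mul_nonneg (by linarith) (hCf0 0)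
  have hK1 : 1 ≤ (M₁ + M₂ + 1) * (Cf 0 + 1) + 1 := by nlinarith [hCf0 0]
  refine ⟨(M₁ + M₂ + 1) * (Cf 0 + 1) + 1, hK1, ?_⟩
  intro τ φ hφ x hx n hn
  have hBφ : 0 ≤ Bnorm 0 φ := bnorm_nonneg φ
  rcases Nat.eq_zero_or_pos τ with hτ0 | hτ1
  · subst hτ0
    rcases Nat.eq_zero_or_pos n with hn0 | hn1
    · subst hn0
      have hx0 : x ((0 : ℕ) : ℤ) = φ 0 := by
        have := hx.1 0
        simpa using this
      rw [hx0]
      calc ‖φ 0‖ ≤ Bnorm 0 φ := norm_le_bnorm hφ 0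
        _ ≤ ((M₁ + M₂ + 1) * (Cf 0 + 1) + 1) * Bnorm 0 φ :=
            le_mul_of_one_le_left hBφ hK1
    · -- restart at time 1
      have hx1 : IsSolution L 0 1 (hist x (1 : ℤ)) x :=
        ⟨fun k => rfl, fun m hm => hx.2 m (Nat.zero_le m)⟩
      have hmem1 : MemB 0 (hist x (1 : ℤ)) := by
        have := memB_hist hx hφ 1 (Nat.zero_le 1)
        simpa using this
      have hb1 : Bnorm 0 (hist x (1 : ℤ)) ≤ (Cf 0 + 1) * Bnorm 0 φ := by
        refine bnorm_le ?_
        intro k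
        cases k with
        | zero =>
            have heq : x (1 : ℤ) = L 0 φ := by
              have h := hx.2 0 (le_refl 0)
              rw [hist_at_start hx] at h
              simpa using h
            have hv : hist x (1 : ℤ) 0 = x (1 : ℤ) := by simp [hist]
            rw [hv, heq]
            have := hCf 0 φ hφ
            nlinarith [bnorm_nonneg φ]
        | succ k =>
            have : hist x (1 : ℤ) (k+1) = φ k := by
              have h := hx.1 k
              simp only [hist]
              rw [show (1 : ℤ) - ((k : ℕ) + 1 : ℕ) = ((0 : ℕ) : ℤ) - k by push_cast; ring]
              exact h
            rw [this]
            have := norm_le_bnorm hφ k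
            nlinarith [hCf0 0]
      have hb := main1 1 (le_refl 1) (hist x (1 : ℤ)) hmem1 x hx1 n hn1
      calc ‖x (n : ℤ)‖ ≤ (M₁ + M₂) * Bnorm 0 (hist x (1 : ℤ)) := hb
        _ ≤ (M₁ + M₂) * ((Cf 0 + 1) * Bnorm 0 φ) :=
            mul_le_mul_of_nonneg_left hb1 (by linarith)
        _ = ((M₁ + M₂) * (Cf 0 + 1)) * Bnorm 0 φ := by ring
        _ ≤ ((M₁ + M₂ + 1) * (Cf 0 + 1) + 1) * Bnorm 0 φ :=
            mul_le_mul_of_nonneg_right (by nlinarith [hCf0 0]) hBφ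
  · have hb := main1 τ hτ1 φ hφ x hx n hn
    calc ‖x (n : ℤ)‖ ≤ (M₁ + M₂) * Bnorm 0 φ := hb
      _ ≤ ((M₁ + M₂ + 1) * (Cf 0 + 1) + 1) * Bnorm 0 φ :=
          mul_le_mul_of_nonneg_right (by nlinarith [hA]) hBφ

end Aux

/-- Theorem 4.7: uniform stability in `B^0` (equivalently in `X` w.r.t. `B^0`)
⟺ `(ℓ^1,ℓ^∞)`-stability together with `(Γ M_L H) ℓ^1(B^0) ⊆ ℓ^∞(X)`. -/
theorem statement5 (L : ℕ → ((ℕ → X) →ₗ[ℝ] X)) (hL : ∀ n, OpBounded 0 (L n)) :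
    (USinB 0 L ↔ USinX 0 L) ∧
    (USinB 0 L ↔ (lplqStable L 1 ∞ ∧
      ∀ g : ℕ → (ℕ → X), (∀ n, MemB 0 (g n)) →
        lpNorm 1 (fun n => Bnorm 0 (g n)) < ∞ →
        ∀ x : ℤ → X, IsSolution L (fun n => L n (Hop g n)) 0 0 x →
          lpNorm ∞ (restrict x) < ∞)) := by
  refine ⟨usinb_iff_usinx L, ?_, ?_⟩
  · intro h
    have hx := (usinb_iff_usinx L).1 h
    exact ⟨forward1 hx, fun g hg hg1 x hxs => forward2 hx g hg hg1 x hxs⟩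
  · rintro ⟨ha, hb⟩
    exact (usinb_iff_usinx L).2 (backward L hL ha hb)

end BP
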